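/- arXiv:2405.19483 — 4 statements merged into one kernel-verified Lean document; each statement's English description precedes it below -/
import Mathlib

section
/- Let C₀ > 0 and M₂ ≥ 0 be real numbers. Then the amplification factor σ(h,k) = 1 − h C₀ k⁴ / (1 + h M₂ k⁴) of the biharmonic-modified scheme satisfies |σ(h,k)| ≤ 1 for every time-step h > 0 and every wavenumber k ∈ ℝ if and only if M₂ ≥ C₀/2. (This is the unconditional linear stability criterion for the biharmonic-modified splitting.) -/
/-!
Put `x = h k⁴ ≥ 0`. The factor `σ = 1 - C₀ x / (1 + M₂ x)` never exceeds `1`, and `σ ≥ -1` is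
the linear condition `(C₀ - 2 M₂) x ≤ 2`. This holds for all `x ≥ 0` exactly when the slope
`C₀ - 2 M₂` is nonpositive; otherwise it fails for `x` large, i.e. for large time-steps.
-/

section

variable {𝕜 : Type*} [Field 𝕜] [LinearOrder 𝕜] [IsStrictOrderedRing 𝕜]

theorem abs_one_sub_div_le_one_iff {a b : 𝕜} (ha : 0 ≤ a) (hb : 0 < b) :
    |1 - a / b| ≤ 1 ↔ a ≤ 2 * b := by
  have hdiv : 0 ≤ a / b := div_nonneg ha hb.le
  rw [abs_le, ← div_le_iff₀ hb]
  constructor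
  · rintro ⟨hlower, -⟩
    linarith
  · intro hle
    constructor <;> linarith

theorem forall_pos_mul_le_iff_nonpos {c d : 𝕜} (hd : 0 ≤ d) :
    (∀ x, 0 < x → c * x ≤ d) ↔ c ≤ 0 := by
  refine ⟨fun H => ?_, fun hc x hx => (mul_nonpos_of_nonpos_of_nonneg hc hx.le).trans hd⟩
  by_contra! hc
  have hx : 0 < (d + 1) / c := by positivity
  have := H _ hx
  rw [mul_div_cancel₀ _ hc.ne'] at this
  linarith

end

/-- Unconditional linear stability criterion for the biharmonic-modified (BHM) splitting:
the amplification factor `σ(h,k) = 1 − h C₀ k⁴ / (1 + h M₂ k⁴)` satisfies `|σ(h,k)| ≤ 1`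
for every time-step `h > 0` and every wavenumber `k ∈ ℝ` if and only if `M₂ ≥ C₀ / 2`. -/
theorem bhm_unconditional_linear_stability (C₀ M₂ : ℝ) (hC₀ : 0 < C₀) (hM₂ : 0 ≤ M₂) :
    (∀ h k : ℝ, 0 < h → |1 - h * C₀ * k ^ 4 / (1 + h * M₂ * k ^ 4)| ≤ 1) ↔ M₂ ≥ C₀ / 2 := by
  have hσ : ∀ h k : ℝ, 0 < h →
      (|1 - h * C₀ * k ^ 4 / (1 + h * M₂ * k ^ 4)| ≤ 1 ↔ (C₀ - 2 * M₂) * (h * k ^ 4) ≤ 2) := by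
    intro h k hh
    rw [abs_one_sub_div_le_one_iff (by positivity) (by positivity)]
    constructor <;> intro <;> linarith
  constructor
  · intro H
    have hslope : C₀ - 2 * M₂ ≤ 0 :=
      (forall_pos_mul_le_iff_nonpos zero_le_two).1 fun h hh => by
        simpa using (hσ h 1 hh).1 (H h 1 hh)
    linarith
  · intro hM h k hh
    refine (hσ h k hh).2 ?_
    exact (mul_nonpos_of_nonpos_of_nonneg (by linarith) (by positivity)).trans zero_le_two
end

section
/- Let C₀ > 0 and M₂ ≥ C₀/2 be real numbers, let h > 0 and let k ∈ ℝ with k ≠ 0. Set σ = 1 − h C₀ k⁴ / (1 + h M₂ k⁴). Then |σ| < 1, and consequently for any initial error e₀ ∈ ℝ the error sequence defined by e_{n+1} = σ e_n satisfies |e_n| ≤ |σ|ⁿ |e₀| and e_n → 0 as n → ∞. -/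
/-- If `M₂ ≥ C₀/2` with `C₀ > 0`, then for any time-step `h > 0` and any nonzero wavenumber `k`
the amplification factor `σ = 1 − h C₀ k⁴/(1 + h M₂ k⁴)` satisfies `|σ| < 1`; consequently any
error sequence `e_{n+1} = σ e n` satisfies `|e_n| ≤ |σ|ⁿ |e₀|` and `e_n → 0`. -/
theorem bhm_error_decay (C₀ M₂ h k : ℝ) (hC₀ : 0 < C₀) (hM₂ : C₀ / 2 ≤ M₂)
    (hh : 0 < h) (hk : k ≠ 0) (σ : ℝ)
    (hσ : σ = 1 - h * C₀ * k ^ 4 / (1 + h * M₂ * k ^ 4)) :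
    |σ| < 1 ∧
      ∀ e : ℕ → ℝ, (∀ n, e (n + 1) = σ * e n) →
        (∀ n, |e n| ≤ |σ| ^ n * |e 0|) ∧
          Filter.Tendsto e Filter.atTop (nhds 0) := by
  have hk4 : 0 < k ^ 4 := by positivity
  have hM₂' : 0 < M₂ := lt_of_lt_of_le (by linarith) hM₂
  have hD : 0 < 1 + h * M₂ * k ^ 4 := by positivity
  have hA : 0 < h * C₀ * k ^ 4 := by positivity
  have habs : |σ| < 1 := by
    rw [abs_lt, hσ]
    constructor
    · have h2 : h * C₀ * k ^ 4 / (1 + h * M₂ * k ^ 4) < 2 := by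
        rw [div_lt_iff₀ hD]
        nlinarith [mul_pos (mul_pos hh hM₂') hk4]
      linarith
    · have : 0 < h * C₀ * k ^ 4 / (1 + h * M₂ * k ^ 4) := div_pos hA hD
      linarith
  refine ⟨habs, fun e he => ?_⟩
  have heq : ∀ n, e n = σ ^ n * e 0 := by
    intro n
    induction n with
    | zero => simp
    | succ n ih => rw [he n, ih, pow_succ]; ring
  constructor
  · intro n
    rw [heq n, abs_mul, abs_pow]
  · have : Filter.Tendsto (fun n => σ ^ n * e 0) Filter.atTop (nhds 0) := by
      simpa using (tendsto_pow_atTop_nhds_zero_of_abs_lt_one habs).mul_const (e 0)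
    exact this.congr fun n => (heq n).symm
end

section
/- Let V be a real vector space, L : V → V a linear map, F : V → V an arbitrary map, h ∈ ℝ with h ≠ 0, M ∈ ℝ, and Uₙ, U ∈ V. For μ ∈ ℝ define F_im^{(μ)}(v) = −μ L v and F_ex^{(μ)}(v) = F(v) − F_im^{(μ)}(v). Then U satisfies the non-iterated Crank–Nicolson-type (BHM-CN₁) update equation with parameter 2M, namely U − Uₙ = h( ½ F_im^{(2M)}(U) + ½ F_ex^{(2M)}(Uₙ) + ½ F(Uₙ) ), if and only if U satisfies the backward-Euler-type (BHM-BE₁) update equation with parameter M, namely U − Uₙ = h( F_im^{(M)}(U) + F_ex^{(M)}(Uₙ) ). In other words, without iteration the BHM-CN scheme reduces to the BHM-BE scheme with doubled splitting parameter M_{2,CN} = 2 M_{2,BE}. -/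
/-- Without iteration, the BHM-CN scheme with splitting parameter `2M` coincides with the
BHM-BE scheme with splitting parameter `M`: with `F_im^{(μ)}(v) = −μ • L v` and
`F_ex^{(μ)}(v) = F(v) − F_im^{(μ)}(v)`, the update `U` satisfies
`U − Uₙ = h(½ F_im^{(2M)}(U) + ½ F_ex^{(2M)}(Uₙ) + ½ F(Uₙ))` iff it satisfies
`U − Uₙ = h(F_im^{(M)}(U) + F_ex^{(M)}(Uₙ))`. -/
theorem bhm_cn1_eq_be1_with_doubled_parameter
    (V : Type*) [AddCommGroup V] [Module ℝ V]
    (L : V →ₗ[ℝ] V) (F : V → V) (h M : ℝ) (hh : h ≠ 0) (Un U : V)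
    (Fim Fex : ℝ → V → V)
    (hFim : ∀ (μ : ℝ) (v : V), Fim μ v = -(μ • L v))
    (hFex : ∀ (μ : ℝ) (v : V), Fex μ v = F v - Fim μ v) :
    (U - Un = h • ((1/2 : ℝ) • Fim (2 * M) U + (1/2 : ℝ) • Fex (2 * M) Un
        + (1/2 : ℝ) • F Un))
      ↔ (U - Un = h • (Fim M U + Fex M Un)) := by
  simp only [hFim, hFex]
  constructor <;> intro hEq <;> rw [hEq] <;> module
end

section
/- Let V be a real Banach space, L : V → V a continuous linear map, h > 0 and M₂ ∈ ℝ, and suppose R : V → V is a continuous linear map that is a two-sided inverse of (id + h M₂ L), i.e., R ∘ (id + h M₂ L) = id and (id + h M₂ L) ∘ R = id. Let F_ex : V → V be Lipschitz with constant K ≥ 0 and suppose h · ‖R‖ · K < 1, where ‖R‖ is the operator norm. Then for every Uₙ ∈ V: (i) there is a unique U* ∈ V satisfying the backward Euler equation U* − Uₙ = h( −M₂ L U* + F_ex(U*) ); and (ii) for any initial iterate U₍₀₎ ∈ V, the iterates U₍ⱼ₎ = R( Uₙ + h F_ex(U₍ⱼ₋₁₎) ) converge to U* as j → ∞. -/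
/-- Convergence of the iterative BHM-BE scheme to the backward Euler solution:
on a real Banach space `V`, with `R` a two-sided inverse of `id + h M₂ L` and `F_ex`
Lipschitz with constant `K` satisfying `h ‖R‖ K < 1`, for each `Uₙ` there is a unique `U*`
with `U* − Uₙ = h(−M₂ L U* + F_ex(U*))`, and the iterates
`U₍ⱼ₎ = R(Uₙ + h F_ex(U₍ⱼ₋₁₎))` converge to `U*` from any initial iterate. -/
theorem bhm_be_iterates_converge
    (V : Type*) [NormedAddCommGroup V] [NormedSpace ℝ V] [CompleteSpace V]
    (L : V →L[ℝ] V) (h M₂ : ℝ) (hh : 0 < h)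
    (R : V →L[ℝ] V)
    (hR₁ : R.comp (ContinuousLinearMap.id ℝ V + (h * M₂) • L)
      = ContinuousLinearMap.id ℝ V)
    (hR₂ : (ContinuousLinearMap.id ℝ V + (h * M₂) • L).comp R
      = ContinuousLinearMap.id ℝ V)
    (Fex : V → V) (K : ℝ) (hK : 0 ≤ K)
    (hLip : ∀ x y : V, ‖Fex x - Fex y‖ ≤ K * ‖x - y‖)
    (hcontr : h * ‖R‖ * K < 1) :
    ∀ Un : V, ∃ Ustar : V,
      (Ustar - Un = h • (-(M₂ • L Ustar) + Fex Ustar)) ∧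
      (∀ U' : V, U' - Un = h • (-(M₂ • L U') + Fex U') → U' = Ustar) ∧
      (∀ U : ℕ → V, (∀ j : ℕ, U (j + 1) = R (Un + h • Fex (U j))) →
        Filter.Tendsto U Filter.atTop (nhds Ustar)) := by
  intro Un
  set T : V → V := fun x => R (Un + h • Fex x) with hTdef
  have hKnn : (0:ℝ) ≤ h * ‖R‖ * K := by positivity
  have hlip : LipschitzWith ⟨h * ‖R‖ * K, hKnn⟩ T := by
    apply LipschitzWith.of_dist_le_mul
    intro x y
    simp only [dist_eq_norm, hTdef]
    have hsub : (Un + h • Fex x) - (Un + h • Fex y) = h • (Fex x - Fex y) := by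
      rw [smul_sub]; abel
    calc ‖R (Un + h • Fex x) - R (Un + h • Fex y)‖
        = ‖R (h • (Fex x - Fex y))‖ := by rw [← map_sub, hsub]
      _ ≤ ‖R‖ * ‖h • (Fex x - Fex y)‖ := R.le_opNorm _
      _ = ‖R‖ * (h * ‖Fex x - Fex y‖) := by
          rw [norm_smul, Real.norm_of_nonneg hh.le]
      _ ≤ ‖R‖ * (h * (K * ‖x - y‖)) := by
          gcongr
          exact hLip x y
      _ = ↑(⟨h * ‖R‖ * K, hKnn⟩ : NNReal) * ‖x - y‖ := by
          push_cast; ring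
  have hc : ContractingWith ⟨h * ‖R‖ * K, hKnn⟩ T := by
    constructor
    · exact_mod_cast hcontr
    · exact hlip
  -- equivalence between the backward-Euler equation and being a fixed point of T
  have hA : ∀ x : V, x - Un = h • (-(M₂ • L x) + Fex x) ↔ T x = x := by
    intro x
    have key : x - Un = h • (-(M₂ • L x) + Fex x) ↔
        x + (h * M₂) • L x = Un + h • Fex x := by
      constructor
      · intro hx
        rw [smul_add, smul_neg, smul_smul] at hx
        linear_combination (norm := abel) hx
      · intro hx
        rw [smul_add, smul_neg, smul_smul]
        linear_combination (norm := abel) hx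
    rw [key]
    constructor
    · intro hx
      have := congrArg (fun v => R v) hx.symm
      simp only [hTdef] at this ⊢
      rw [this]
      have := congrFun (congrArg DFunLike.coe hR₁) x
      simpa using this
    · intro hx
      have h2 := congrFun (congrArg DFunLike.coe hR₂) (Un + h • Fex x)
      simp only [ContinuousLinearMap.comp_apply, ContinuousLinearMap.add_apply,
        ContinuousLinearMap.coe_id', id_eq, ContinuousLinearMap.smul_apply] at h2
      simp only [hTdef] at hx
      rw [hx] at h2
      linear_combination (norm := abel) h2
  refine ⟨hc.fixedPoint T, ?_, ?_, ?_⟩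
  · exact (hA _).mpr hc.fixedPoint_isFixedPt
  · intro U' hU'
    exact hc.fixedPoint_unique ((hA U').mp hU')
  · intro U hU
    have hiter : ∀ j, U j = T^[j] (U 0) := by
      intro j
      induction j with
      | zero => simp
      | succ n ih =>
        rw [Function.iterate_succ_apply', ← ih, hU n]
    have := hc.tendsto_iterate_fixedPoint (U 0)
    exact (Filter.tendsto_congr hiter).mpr (by simpa using this)
end
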